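/- arXiv:1507.03173 — 6 statements merged into one kernel-verified Lean document; each statement's English description precedes it below -/
import Mathlib

section
/- Let 0<q<1, λ>0, μ>0, and let v* ∈ argmin_{v∈ℝ} { (z-v)²/(2μ) + λ|v|^q } for a given z ∈ ℝ. Then either v* = 0 or |v*| ≥ (2λμ(1-q))^{1/(2-q)}. -/
/-!
Let `v ≠ 0` minimize `f v = (z - v)² / (2μ) + λ|v|^q`. Since `s ↦ f (s v)` has a minimum at
`s = 1`, its derivative vanishes there (this avoids differentiating `|·|^q` at `v`), giving
`v (z - v) = λμq|v|^q`. Comparing with `f 0 = z² / (2μ)` gives `v² + 2λμ|v|^q ≤ 2zv`.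
Eliminating `zv` leaves `2λμ(1 - q)|v|^q ≤ |v|²`, i.e. `2λμ(1 - q) ≤ |v|^(2 - q)`.
-/

open Filter Topology

noncomputable def proxObjective (q lam mu z v : ℝ) : ℝ := (z - v) ^ 2 / (2 * mu) + lam * |v| ^ q

theorem mul_sub_eq_of_isLocalMin_proxObjective {q lam mu z v : ℝ} (hmu : mu ≠ 0)
    (hmin : IsLocalMin (proxObjective q lam mu z) v) :
    v * (z - v) = lam * mu * q * |v| ^ q := by
  set g : ℝ → ℝ := fun s => (z - s * v) ^ 2 / (2 * mu) + lam * (s ^ q * |v| ^ q)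
  have hg : (proxObjective q lam mu z ∘ fun s => s * v) =ᶠ[𝓝 1] g := by
    filter_upwards [eventually_gt_nhds one_pos] with s hs
    simp only [Function.comp, proxObjective, g, abs_mul, abs_of_pos hs,
      Real.mul_rpow hs.le (abs_nonneg v)]
  have hg_min : IsLocalMin g 1 :=
    (IsLocalMin.comp_continuous (g := fun s => s * v) (by rwa [one_mul])
      (continuous_mul_const v).continuousAt).congr hg
  have hg_deriv : HasDerivAt g
      (2 * (z - 1 * v) * (0 - 1 * v) / (2 * mu) + lam * (q * 1 ^ (q - 1) * |v| ^ q)) 1 := by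
    refine HasDerivAt.add ?_ ?_
    · exact ((((hasDerivAt_id 1).mul_const v).const_sub z).pow 2).div_const _ |>.congr_deriv
        (by simp)
    · exact ((Real.hasDerivAt_rpow_const (Or.inl one_ne_zero)).mul_const _).const_mul lam
  have h := hg_min.hasDerivAt_eq_zero hg_deriv
  rw [Real.one_rpow] at h
  field_simp at h
  linear_combination -h

theorem sq_add_le_of_proxObjective_le_zero {q lam mu z v : ℝ} (hq : 0 < q) (hmu : 0 < mu)
    (h : proxObjective q lam mu z v ≤ proxObjective q lam mu z 0) :
    v ^ 2 + 2 * mu * lam * |v| ^ q ≤ 2 * z * v := by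
  simp only [proxObjective, abs_zero, Real.zero_rpow hq.ne', mul_zero, add_zero, sub_zero] at h
  rw [div_add' _ _ _ (by positivity), div_le_div_iff_of_pos_right (by positivity)] at h
  linarith

theorem mul_rpow_le_sq_of_isMinimizer_proxObjective {q lam mu z v : ℝ} (hq : 0 < q) (hmu : 0 < mu)
    (hmin : ∀ w, proxObjective q lam mu z v ≤ proxObjective q lam mu z w) :
    2 * lam * mu * (1 - q) * |v| ^ q ≤ v ^ 2 := by
  have hstat := mul_sub_eq_of_isLocalMin_proxObjective hmu.ne' (Eventually.of_forall hmin)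
  have hzero := sq_add_le_of_proxObjective_le_zero hq hmu (hmin 0)
  linear_combination hzero + 2 * hstat

theorem rpow_one_div_sub_le_of_mul_rpow_le_rpow {c t p q : ℝ} (hc : 0 ≤ c) (hqp : q < p)
    (ht : 0 < t) (h : c * t ^ q ≤ t ^ p) : c ^ (1 / (p - q)) ≤ t := by
  have hsplit : t ^ p = t ^ (p - q) * t ^ q := by rw [← Real.rpow_add ht, sub_add_cancel]
  rw [hsplit, mul_le_mul_iff_of_pos_right (Real.rpow_pos_of_pos ht q)] at h
  rwa [one_div, Real.rpow_inv_le_iff_of_pos hc ht.le (sub_pos.mpr hqp)]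

/-- Any minimizer of `v ↦ (z-v)²/(2μ) + λ|v|^q` over `ℝ` is either `0`
or has magnitude at least `η = (2λμ(1-q))^(1/(2-q))`. -/
theorem prox_minimizer_zero_or_large (q lam mu z vstar : ℝ) (hq0 : 0 < q) (hq1 : q < 1)
    (hlam : 0 < lam) (hmu : 0 < mu)
    (hmin : ∀ v : ℝ, (z - vstar) ^ 2 / (2 * mu) + lam * |vstar| ^ q ≤
      (z - v) ^ 2 / (2 * mu) + lam * |v| ^ q) :
    vstar = 0 ∨ (2 * lam * mu * (1 - q)) ^ ((1 : ℝ) / (2 - q)) ≤ |vstar| := by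
  refine or_iff_not_imp_left.mpr fun hv => ?_
  have key := mul_rpow_le_sq_of_isMinimizer_proxObjective (z := z) hq0 hmu hmin
  rw [← sq_abs, ← Real.rpow_two] at key
  have hc : 0 ≤ 2 * lam * mu * (1 - q) := by
    have := sub_pos.mpr hq1
    positivity
  exact rpow_one_div_sub_le_of_mul_rpow_le_rpow hc (by linarith) (abs_pos.mpr hv) key
end

section
/- Let 0<q<1, λ>0, μ>0, and z ∈ ℝ with |z| < τ_{λμ,q} = ((2-q)/(2-2q))(2λμ(1-q))^{1/(2-q)}. Then 0 is the unique minimizer of v ↦ (z-v)²/(2μ) + λ|v|^q over ℝ. -/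
/-!
Writing `t = |v| > 0`, the strict inequality follows, via `z v ≤ |z| t`, from
`|z| < t / 2 + λμ t^(q-1)`, and the threshold `τ` is exactly the minimum over `t > 0` of the
right-hand side. That minimum bound is the weighted AM–GM inequality with weights
`(1-q)/(2-q)` and `1/(2-q)`, chosen so that the powers of `t` cancel.
-/

open Real

theorem threshold_le_half_add_mul_rpow {q c t : ℝ} (hq : q < 1) (hc : 0 ≤ c) (ht : 0 < t) :
    (2 - q) / (2 - 2 * q) * (2 * c * (1 - q)) ^ ((1 : ℝ) / (2 - q)) ≤ t / 2 + c * t ^ (q - 1) := by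
  have h2q : 0 < 2 - q := by linarith
  have h22q : 0 < 2 - 2 * q := by linarith
  have h1q : 1 - q ≠ 0 := by linarith
  set α : ℝ := (1 - q) / (2 - q) with hα_def
  set β : ℝ := 1 / (2 - q) with hβ_def
  set K : ℝ := (2 - q) / (2 - 2 * q) with hK_def
  have hα : 0 < α := div_pos (by linarith) h2q
  have hβ : 0 < β := by positivity
  have hK : 0 < K := div_pos h2q h22q
  have hαβ : α + β = 1 := by rw [hα_def, hβ_def]; field_simp; ring
  have ht_cancel : t ^ α * t ^ ((q - 1) * β) = 1 := by
    rw [← rpow_add ht, show α + (q - 1) * β = 0 by rw [hα_def, hβ_def]; field_simp; ring,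
      rpow_zero]
  have hKc : K * (2 * c * (1 - q)) = c * (2 - q) := by
    rw [hK_def]; field_simp
  have amgm := geom_mean_le_arith_mean2_weighted hα.le hβ.le (mul_pos hK ht).le
    (by positivity : 0 ≤ c * (2 - q) * t ^ (q - 1)) hαβ
  calc K * (2 * c * (1 - q)) ^ β
      = K ^ α * (c * (2 - q)) ^ β := by
        rw [← hKc, mul_rpow hK.le (by nlinarith), ← mul_assoc, ← rpow_add hK, hαβ, rpow_one]
    _ = (K * t) ^ α * (c * (2 - q) * t ^ (q - 1)) ^ β := by
        rw [mul_rpow hK.le ht.le, mul_rpow (mul_nonneg hc h2q.le) (rpow_nonneg ht.le _),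
          ← rpow_mul ht.le]
        linear_combination K ^ α * (c * (2 - q)) ^ β * ht_cancel.symm
    _ ≤ α * (K * t) + β * (c * (2 - q) * t ^ (q - 1)) := amgm
    _ = t / 2 + c * t ^ (q - 1) := by rw [hα_def, hβ_def, hK_def]; field_simp

theorem sq_div_lt_sub_sq_div_add_mul_rpow {q lam mu z v : ℝ} (hmu : 0 < mu) (hv : v ≠ 0)
    (h : |z| < |v| / 2 + lam * mu * |v| ^ (q - 1)) :
    z ^ 2 / (2 * mu) < (z - v) ^ 2 / (2 * mu) + lam * |v| ^ q := by
  have ht : 0 < |v| := abs_pos.mpr hv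
  have hpow : |v| ^ (q - 1) * |v| = |v| ^ q := by
    rw [rpow_sub_one ht.ne', div_mul_cancel₀ _ ht.ne']
  have hzv : z * v ≤ |z| * |v| := (le_abs_self _).trans (abs_mul z v).le
  have hscaled : |z| * |v| < |v| ^ 2 / 2 + lam * mu * |v| ^ q :=
    calc |z| * |v| < (|v| / 2 + lam * mu * |v| ^ (q - 1)) * |v| := mul_lt_mul_of_pos_right h ht
      _ = |v| ^ 2 / 2 + lam * mu * |v| ^ q := by rw [← hpow]; ring
  have hsq : v ^ 2 = |v| ^ 2 := (sq_abs v).symm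
  rw [div_add' _ _ _ (by positivity), div_lt_div_iff_of_pos_right (by positivity)]
  linarith [hzv, hscaled, hsq]

/-- If `|z| < τ = ((2-q)/(2-2q))(2λμ(1-q))^(1/(2-q))`, then `0` is the unique
minimizer of `v ↦ (z-v)²/(2μ) + λ|v|^q` over `ℝ`. -/
theorem prox_below_threshold_zero_unique_min (q lam mu z : ℝ) (hq0 : 0 < q) (hq1 : q < 1)
    (hlam : 0 < lam) (hmu : 0 < mu)
    (hz : |z| < (2 - q) / (2 - 2 * q) * (2 * lam * mu * (1 - q)) ^ ((1 : ℝ) / (2 - q))) :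
    ∀ v : ℝ, v ≠ 0 →
      (z - 0) ^ 2 / (2 * mu) + lam * |(0 : ℝ)| ^ q <
        (z - v) ^ 2 / (2 * mu) + lam * |v| ^ q := by
  intro v hv
  rw [mul_assoc 2 lam mu] at hz
  have hthreshold := threshold_le_half_add_mul_rpow hq1 (mul_pos hlam hmu).le (abs_pos.mpr hv)
  simpa [zero_rpow hq0.ne'] using sq_div_lt_sub_sq_div_add_mul_rpow hmu hv (hz.trans_le hthreshold)
end

section
/- Let 0<q<1, λ>0, μ>0, and z ∈ ℝ with |z| > τ_{λμ,q}. Then every minimizer v* of v ↦ (z-v)²/(2μ) + λ|v|^q is nonzero and satisfies |v*| > η_{λμ,q} = (2λμ(1-q))^{1/(2-q)}. -/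
/-!
Write `F` for the objective, `c = 2λμ(1-q)` and `η = c^(1/(2-q))`, so that `c η^q = η²`.
This identity gives `F(η) - F(0) = η (τ - z) / μ`, so for `z > τ` a minimizer `v` is not `0`,
and comparing `F(v)` with `F(-v)` shows that it has the sign of `z`. At a minimizer `v > 0` the
derivative vanishes, `v - z + λμq v^(q-1) = 0`; combining this with `F(v) ≤ F(0)` eliminates
`λμ v^q` and leaves `(2 - 2q) z ≤ (2 - q) v`, so `v > (2 - 2q) τ / (2 - q) = η`.
-/

open Filter Topology

namespace LqProx

noncomputable def objective (q lam mu z v : ℝ) : ℝ := (z - v) ^ 2 / (2 * mu) + lam * |v| ^ q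

noncomputable def eta (q lam mu : ℝ) : ℝ := (2 * lam * mu * (1 - q)) ^ ((1 : ℝ) / (2 - q))

noncomputable def tau (q lam mu : ℝ) : ℝ := (2 - q) / (2 - 2 * q) * eta q lam mu

theorem objective_neg (q lam mu z v : ℝ) :
    objective q lam mu (-z) (-v) = objective q lam mu z v := by
  simp only [objective, abs_neg]
  ring

variable {q lam mu z : ℝ}

theorem nonneg_of_minimizer (hmu : 0 < mu) (hz : 0 < z) {v : ℝ}
    (hmin : ∀ w, objective q lam mu z v ≤ objective q lam mu z w) : 0 ≤ v := by
  have h := hmin (-v)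
  simp only [objective, abs_neg, add_le_add_iff_right] at h
  rw [div_le_div_iff_of_pos_right (by positivity)] at h
  nlinarith

theorem hasDerivAt_objective {v : ℝ} (hv : 0 < v) :
    HasDerivAt (objective q lam mu z) ((v - z) / mu + lam * (q * v ^ (q - 1))) v := by
  have habs : (fun w : ℝ => |w| ^ q) =ᶠ[𝓝 v] fun w => w ^ q := by
    filter_upwards [lt_mem_nhds hv] with w hw
    rw [abs_of_pos hw]
  have hquad := (((hasDerivAt_id' v).const_sub z).fun_pow 2).div_const (2 * mu)
  have hpow :=
    ((Real.hasDerivAt_rpow_const (Or.inl hv.ne')).congr_of_eventuallyEq habs).const_mul lam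
  refine (hquad.add hpow).congr_deriv ?_
  rw [show ((2 : ℕ) : ℝ) * (z - v) ^ (2 - 1) * -1 = 2 * (v - z) by ring,
    mul_div_mul_left _ _ two_ne_zero]

theorem stationary_of_minimizer {v : ℝ} (hv : 0 < v)
    (hmin : ∀ w, objective q lam mu z v ≤ objective q lam mu z w) :
    (v - z) / mu + lam * (q * v ^ (q - 1)) = 0 :=
  IsLocalMin.hasDerivAt_eq_zero (Eventually.of_forall hmin) (hasDerivAt_objective hv)

theorem two_sub_two_mul_le_of_stationary (hq : 0 < q) (hmu : 0 < mu) {v : ℝ} (hv : 0 < v)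
    (hstat : (v - z) / mu + lam * (q * v ^ (q - 1)) = 0)
    (hle : objective q lam mu z v ≤ objective q lam mu z 0) :
    (2 - 2 * q) * z ≤ (2 - q) * v := by
  have hstat' : v ^ 2 - z * v + q * (lam * mu * v ^ q) = 0 := by
    rw [Real.rpow_sub_one hv.ne'] at hstat
    field_simp at hstat
    linear_combination hstat
  have hle' : v ^ 2 - 2 * z * v + 2 * (lam * mu * v ^ q) ≤ 0 := by
    simp only [objective, abs_of_pos hv, abs_zero, Real.zero_rpow hq.ne'] at hle
    have := mul_le_mul_of_nonneg_left hle (by positivity : (0 : ℝ) ≤ 2 * mu)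
    field_simp at this
    linear_combination this
  have : (2 - 2 * q) * z * v ≤ (2 - q) * v * v := by
    linear_combination (-2) * hstat' + q * hle'
  exact le_of_mul_le_mul_right this hv

theorem eta_pos (hq1 : q < 1) (hlam : 0 < lam) (hmu : 0 < mu) : 0 < eta q lam mu := by
  have : 0 < 1 - q := by linarith
  unfold eta
  positivity

theorem mul_eta_rpow (hq1 : q < 1) (hlam : 0 < lam) (hmu : 0 < mu) :
    2 * lam * mu * (1 - q) * eta q lam mu ^ q = eta q lam mu ^ 2 := by
  have hc : 0 < 2 * lam * mu * (1 - q) := by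
    have : 0 < 1 - q := by linarith
    positivity
  have heta : eta q lam mu ^ (2 - q) = 2 * lam * mu * (1 - q) := by
    rw [eta, one_div, Real.rpow_inv_rpow hc.le (by linarith)]
  rw [← heta, ← Real.rpow_add (eta_pos hq1 hlam hmu), ← Real.rpow_natCast]
  norm_num

theorem objective_eta_sub_objective_zero (hq0 : 0 < q) (hq1 : q < 1) (hlam : 0 < lam)
    (hmu : 0 < mu) :
    objective q lam mu z (eta q lam mu) - objective q lam mu z 0
      = eta q lam mu * (tau q lam mu - z) / mu := by
  have hη := eta_pos hq1 hlam hmu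
  have h1q : 1 - q ≠ 0 := by linarith
  have hlamη : lam * eta q lam mu ^ q = eta q lam mu ^ 2 / (2 * mu * (1 - q)) := by
    rw [eq_div_iff (by nlinarith), ← mul_eta_rpow hq1 hlam hmu]
    ring
  simp only [objective, tau, abs_of_pos hη, abs_zero, Real.zero_rpow hq0.ne', hlamη]
  field_simp
  ring

theorem ne_zero_and_eta_lt_abs_of_minimizer (hq0 : 0 < q) (hq1 : q < 1) (hlam : 0 < lam)
    (hmu : 0 < mu) (hz : tau q lam mu < z) {v : ℝ}
    (hmin : ∀ w, objective q lam mu z v ≤ objective q lam mu z w) :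
    v ≠ 0 ∧ eta q lam mu < |v| := by
  have hη := eta_pos hq1 hlam hmu
  have hτ : 0 < tau q lam mu := mul_pos (div_pos (by linarith) (by linarith)) hη
  have hne : v ≠ 0 := by
    have hdiff := objective_eta_sub_objective_zero (z := z) hq0 hq1 hlam hmu
    have : eta q lam mu * (tau q lam mu - z) / mu < 0 :=
      div_neg_of_neg_of_pos (mul_neg_of_pos_of_neg hη (by linarith)) hmu
    rintro rfl
    linarith [hmin (eta q lam mu)]
  have hv : 0 < v := (nonneg_of_minimizer hmu (hτ.trans hz) hmin).lt_of_ne' hne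
  have hbound := two_sub_two_mul_le_of_stationary hq0 hmu hv (stationary_of_minimizer hv hmin)
    (hmin 0)
  have htau : (2 - 2 * q) * tau q lam mu = (2 - q) * eta q lam mu := by
    have : 1 - q ≠ 0 := by linarith
    rw [tau]
    field_simp
  refine ⟨hne, ?_⟩
  rw [abs_of_pos hv]
  have : (2 - q) * eta q lam mu < (2 - q) * v :=
    calc (2 - q) * eta q lam mu = (2 - 2 * q) * tau q lam mu := htau.symm
      _ < (2 - 2 * q) * z := mul_lt_mul_of_pos_left hz (by linarith)
      _ ≤ (2 - q) * v := hbound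
  exact lt_of_mul_lt_mul_left this (by linarith)

end LqProx

open LqProx in
/-- If `|z| > τ = ((2-q)/(2-2q))(2λμ(1-q))^(1/(2-q))`, then every minimizer `v*` of
`v ↦ (z-v)²/(2μ) + λ|v|^q` is nonzero and satisfies `|v*| > η = (2λμ(1-q))^(1/(2-q))`. -/
theorem prox_above_threshold_minimizer_large (q lam mu z vstar : ℝ) (hq0 : 0 < q)
    (hq1 : q < 1) (hlam : 0 < lam) (hmu : 0 < mu)
    (hz : (2 - q) / (2 - 2 * q) * (2 * lam * mu * (1 - q)) ^ ((1 : ℝ) / (2 - q)) < |z|)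
    (hmin : ∀ v : ℝ, (z - vstar) ^ 2 / (2 * mu) + lam * |vstar| ^ q ≤
      (z - v) ^ 2 / (2 * mu) + lam * |v| ^ q) :
    vstar ≠ 0 ∧ (2 * lam * mu * (1 - q)) ^ ((1 : ℝ) / (2 - q)) < |vstar| := by
  rcases le_or_gt 0 z with hz0 | hz0
  · rw [abs_of_nonneg hz0] at hz
    exact ne_zero_and_eta_lt_abs_of_minimizer hq0 hq1 hlam hmu hz hmin
  · rw [abs_of_neg hz0] at hz
    have hmin' (w : ℝ) : objective q lam mu (-z) (-vstar) ≤ objective q lam mu (-z) w := by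
      rw [objective_neg, ← neg_neg w, objective_neg]
      exact hmin (-w)
    simpa only [ne_eq, neg_eq_zero, abs_neg, eta] using
      ne_zero_and_eta_lt_abs_of_minimizer hq0 hq1 hlam hmu hz hmin'
end

section
/- Let x, x⁺ ∈ ℝ^N differ only in coordinate i, where x⁺_i minimizes v ↦ (z_i − v)²/2 + λμ|v|^q with z_i = x_i − μ A_iᵀ(Ax − y). If 0 < μ < 1/L_max with L_max = max_j ‖A_j‖₂², then T_λ(x) − T_λ(x⁺) ≥ ½(1/μ − L_max)‖x − x⁺‖₂², where T_λ(x) = ½‖Ax−y‖₂² + λ‖x‖_q^q. -/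
open Finset

/-- Sufficient decrease of one Gauss–Seidel iterative thresholding (GAITA) step:
if `x⁺` differs from `x` only in coordinate `i`, where `x⁺ i` minimizes the
scalar prox subproblem `v ↦ (zᵢ − v)²/2 + λμ|v|^q` with
`zᵢ = xᵢ − μ Aᵢᵀ(Ax − y)`, and `0 < μ < 1/L_max` with `L_max = maxⱼ ‖Aⱼ‖₂²`,
then `T_λ(x) − T_λ(x⁺) ≥ ½(1/μ − L_max)‖x − x⁺‖₂²`. -/
theorem gaita_sufficient_decrease (m N : ℕ) (A : Matrix (Fin m) (Fin N) ℝ)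
    (y : Fin m → ℝ) (q lam mu Lmax : ℝ) (hq0 : 0 < q) (hq1 : q < 1) (hlam : 0 < lam)
    (hLmax : IsGreatest (Set.range fun j : Fin N => ∑ k, (A k j) ^ 2) Lmax)
    (hmu0 : 0 < mu) (hmu1 : mu < 1 / Lmax)
    (T : (Fin N → ℝ) → ℝ)
    (hT : ∀ x, T x = (1 / 2) * ∑ k, (A.mulVec x k - y k) ^ 2 + lam * ∑ j, |x j| ^ q)
    (x xp : Fin N → ℝ) (i : Fin N) (hfix : ∀ j, j ≠ i → xp j = x j)
    (z : ℝ) (hz : z = x i - mu * ∑ k, A k i * (A.mulVec x k - y k))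
    (hmin : ∀ v : ℝ, (z - xp i) ^ 2 / 2 + lam * mu * |xp i| ^ q ≤
      (z - v) ^ 2 / 2 + lam * mu * |v| ^ q) :
    T x - T xp ≥ (1 / 2) * (1 / mu - Lmax) * ∑ j, (x j - xp j) ^ 2 := by

  classical
  set d := xp i - x i with hd
  set g := ∑ k, A k i * (A.mulVec x k - y k) with hg
  set L := ∑ k, (A k i) ^ 2 with hL
  have hmv : ∀ k, A.mulVec xp k = A.mulVec x k + A k i * d := by
    intro k
    simp only [Matrix.mulVec, dotProduct]
    have h1 : ∑ j, A k j * xp j - ∑ j, A k j * x j = A k i * d := by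
      rw [← Finset.sum_sub_distrib]
      rw [Finset.sum_eq_single i]
      · rw [hd]; ring
      · intro j _ hj; rw [hfix j hj]; ring
      · intro h; exact absurd (Finset.mem_univ i) h
    linarith
  have hsq : ∑ k, (A.mulVec xp k - y k) ^ 2
      = ∑ k, (A.mulVec x k - y k) ^ 2 + 2 * d * g + d ^ 2 * L := by
    have hk : ∀ k ∈ Finset.univ, (A.mulVec xp k - y k) ^ 2
        = (A.mulVec x k - y k) ^ 2 + 2 * d * (A k i * (A.mulVec x k - y k))
          + d ^ 2 * (A k i) ^ 2 := by
      intro k _; rw [hmv k]; ring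
    rw [Finset.sum_congr rfl hk, Finset.sum_add_distrib, Finset.sum_add_distrib,
      ← Finset.mul_sum, ← Finset.mul_sum, hg, hL]
  have habs : ∑ j, |xp j| ^ q - ∑ j, |x j| ^ q = |xp i| ^ q - |x i| ^ q := by
    rw [← Finset.sum_sub_distrib]
    rw [Finset.sum_eq_single i]
    · intro j _ hj; rw [hfix j hj]; ring
    · intro h; exact absurd (Finset.mem_univ i) h
  have hdist : ∑ j, (x j - xp j) ^ 2 = d ^ 2 := by
    rw [Finset.sum_eq_single i]
    · rw [hd]; ring
    · intro j _ hj; rw [hfix j hj]; ring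
    · intro h; exact absurd (Finset.mem_univ i) h
  have hLle : L ≤ Lmax := hLmax.2 ⟨i, rfl⟩
  have key := hmin (x i)
  have hz1 : z - x i = -(mu * g) := by rw [hz, hg]; ring
  have hz2 : z - xp i = -(mu * g) - d := by rw [hz, hg, hd]; ring
  rw [hz1, hz2] at key
  -- key : (-(mu*g) - d)^2/2 + lam*mu*|xp i|^q ≤ (-(mu*g))^2/2 + lam*mu*|x i|^q
  have key' : mu * g * d + d ^ 2 / 2 ≤ lam * mu * (|x i| ^ q - |xp i| ^ q) := by
    nlinarith [key]
  have key2 : g * d + d ^ 2 / (2 * mu) ≤ lam * (|x i| ^ q - |xp i| ^ q) := by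
    have h1 : (mu * g * d + d ^ 2 / 2) / mu ≤ (lam * mu * (|x i| ^ q - |xp i| ^ q)) / mu :=
      (div_le_div_iff_of_pos_right hmu0).mpr key'
    have e1 : (mu * g * d + d ^ 2 / 2) / mu = g * d + d ^ 2 / (2 * mu) := by
      field_simp
    have e2 : (lam * mu * (|x i| ^ q - |xp i| ^ q)) / mu = lam * (|x i| ^ q - |xp i| ^ q) := by
      field_simp
    rw [e1, e2] at h1; exact h1
  have hLd : d ^ 2 * L ≤ d ^ 2 * Lmax := mul_le_mul_of_nonneg_left hLle (sq_nonneg d)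
  have hre : (1 / 2) * (1 / mu - Lmax) * d ^ 2 = d ^ 2 / (2 * mu) - (1 / 2) * (d ^ 2 * Lmax) := by
    field_simp
  rw [hT x, hT xp, hsq, hdist]
  have habs' : lam * ∑ j, |x j| ^ q - lam * ∑ j, |xp j| ^ q
      = lam * (|x i| ^ q - |xp i| ^ q) := by
    rw [← mul_sub]
    have : (∑ j, |x j| ^ q) - ∑ j, |xp j| ^ q = |x i| ^ q - |xp i| ^ q := by linarith [habs]
    rw [this]
  nlinarith [key2, hLd, hre, habs', sq_nonneg d]
end

section
/- Let T_λ(x) = ½‖Ax−y‖₂² + λ‖x‖_q^q with 0<q<1, λ>0. Let x* ∈ ℝ^N with support I = Supp(x*), and suppose: (i) A_Iᵀ(Ax*−y) + λφ₁(x*_I) = 0, where φ₁(x*_I)_i = q·sgn(x*_i)|x*_i|^{q−1} for i ∈ I; (ii) A_IᵀA_I + λq(q−1)Λ(x*_I) is positive definite, where Λ(x*_I) = diag((|x*_i|^{q−2})_{i∈I}). Then x* is a strict local minimizer of T_λ. -/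
/-!
Write a perturbation `x` of `x*` as `z + v`, where `z` agrees with `x` on the support `I` and
with `x*` (that is, with `0`) off it. On the support the objective is smooth: the first-order
condition kills the linear term of the second-order Taylor expansion of `|·|^q` at the nonzero
`x*_i`, so `T(z) - T(x*)` is half the positive definite Hessian form plus `o(‖z - x*‖²)`, which
is positive for `z ≠ x*`. Off the support, passing from `z` to `z + v` changes the quadratic part
by at least `-G ∑ |v_j|` for a local bound `G` on the gradient, while the penalty grows by
`λ ∑ |v_j|^q`, which dominates near `0` because `q < 1`.
-/

open Filter Topology Asymptotics Finset Matrix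

theorem isLittleO_sub_taylor_two {f f' : ℝ → ℝ} {f'' x₀ : ℝ} {s : Set ℝ} (hs : Convex ℝ s)
    (hx₀ : x₀ ∈ s) (hf : ∀ x ∈ s, HasDerivWithinAt f (f' x) s x)
    (hf' : HasDerivWithinAt f' f'' s x₀) :
    (fun x => f x - f x₀ - f' x₀ * (x - x₀) - f'' / 2 * (x - x₀) ^ 2) =o[𝓝[s] x₀]
      fun x => (x - x₀) ^ 2 := by
  have hρ : ∀ x ∈ s, HasDerivWithinAt
      (fun x => f x - f x₀ - f' x₀ * (x - x₀) - f'' / 2 * (x - x₀) ^ 2)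
      (f' x - f' x₀ - f'' * (x - x₀)) s x := fun x hx => by
    have hlin := ((hasDerivWithinAt_id x s).sub_const x₀).const_mul (f' x₀)
    have hsq := (((hasDerivWithinAt_id x s).sub_const x₀).pow 2).const_mul (f'' / 2)
    exact ((((hf x hx).sub_const (f x₀)).sub hlin).sub hsq).congr_deriv (by simp only [id]; ring)
  have hρ' : (fun x => f' x - f' x₀ - f'' * (x - x₀)) =o[𝓝[s] x₀] fun x => (x - x₀) ^ 1 := by
    simpa [mul_comm] using hasDerivWithinAt_iff_isLittleO.1 hf'
  simpa using hs.isLittleO_pow_succ_real hx₀ hρ hρ'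

noncomputable def absRpowRemainder (q a t : ℝ) : ℝ :=
  |a + t| ^ q - |a| ^ q - q * Real.sign a * |a| ^ (q - 1) * t
    - q * (q - 1) / 2 * |a| ^ (q - 2) * t ^ 2

theorem isLittleO_absRpowRemainder (q : ℝ) {a : ℝ} (ha : a ≠ 0) :
    absRpowRemainder q a =o[𝓝 0] fun t => t ^ 2 := by
  have hA : 0 < |a| := abs_pos.2 ha
  obtain ⟨hsa, hs2⟩ : Real.sign a * |a| = a ∧ Real.sign a ^ 2 = 1 := by
    rcases ha.lt_or_gt with h | h <;>
      simp [Real.sign_of_neg, Real.sign_of_pos, abs_of_neg, abs_of_pos, h]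
  have hderiv : HasDerivAt (fun x => q * x ^ (q - 1)) (q * (q - 1) * |a| ^ (q - 2)) |a| :=
    ((Real.hasDerivAt_rpow_const (Or.inl hA.ne')).const_mul q).congr_deriv
      (by rw [sub_sub, one_add_one_eq_two, mul_assoc])
  have htaylor := isLittleO_sub_taylor_two (convex_Ioi 0) hA
    (fun x hx => (Real.hasDerivAt_rpow_const (Or.inl (ne_of_gt hx))).hasDerivWithinAt)
    hderiv.hasDerivWithinAt
  rw [nhdsWithin_eq_nhds.2 (Ioi_mem_nhds hA)] at htaylor
  have hline : Tendsto (fun t => |a| + Real.sign a * t) (𝓝 0) (𝓝 |a|) := by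
    simpa using ((continuous_const_mul (Real.sign a)).const_add |a|).tendsto 0
  refine (htaylor.comp_tendsto hline).congr' ?_ (Eventually.of_forall fun t => ?_)
  · filter_upwards [hline.eventually (eventually_gt_nhds hA)] with t ht
    have habs : |a + t| = |a| + Real.sign a * t := by
      have hs1 : |Real.sign a| = 1 := by
        rw [← sq_eq_sq₀ (abs_nonneg _) zero_le_one, sq_abs, hs2, one_pow]
      calc |a + t| = |Real.sign a * (|a| + Real.sign a * t)| := by
            congr 1; linear_combination -hsa - t * hs2
        _ = |a| + Real.sign a * t := by rw [abs_mul, hs1, one_mul, abs_of_pos ht]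
    simp only [Function.comp, absRpowRemainder, habs]
    linear_combination (-(q * (q - 1) / 2 * |a| ^ (q - 2)) * t ^ 2) * hs2
  · simp only [Function.comp, add_sub_cancel_left]
    linear_combination t ^ 2 * hs2

theorem eventually_mul_abs_le_abs_rpow {q : ℝ} (hq : q < 1) (c : ℝ) :
    ∀ᶠ t in 𝓝 (0 : ℝ), c * |t| ≤ |t| ^ q := by
  have hcont : Tendsto (fun t : ℝ => c * |t| ^ (1 - q)) (𝓝 0) (𝓝 0) := by
    have : Continuous fun t : ℝ => c * |t| ^ (1 - q) :=
      continuous_const.mul (continuous_abs.rpow_const fun _ => Or.inr (by linarith))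
    simpa [Real.zero_rpow (by linarith : (1 - q) ≠ 0)] using this.tendsto 0
  filter_upwards [hcont.eventually (eventually_lt_nhds one_pos)] with t ht
  calc c * |t| = c * |t| ^ (1 - q) * |t| ^ q := by
        rw [mul_assoc, ← Real.rpow_add' (abs_nonneg t) (by simp), sub_add_cancel, Real.rpow_one]
    _ ≤ |t| ^ q := mul_le_of_le_one_left (by positivity) ht.le

theorem isLittleO_sum_absRpowRemainder {ι : Type*} [Fintype ι] (q : ℝ) {x₀ : ι → ℝ}
    {I : Finset ι} (hx₀ : ∀ i ∈ I, x₀ i ≠ 0) :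
    (fun h : ι → ℝ => ∑ i ∈ I, absRpowRemainder q (x₀ i) (h i)) =o[𝓝 0] fun h => ‖h‖ ^ 2 := by
  refine IsLittleO.fun_sum fun i hi => ?_
  have hi' := (isLittleO_absRpowRemainder q (hx₀ i hi)).comp_tendsto
    ((continuous_apply i).tendsto' (0 : ι → ℝ) 0 rfl)
  refine hi'.trans_isBigO (IsBigO.of_bound 1 (Eventually.of_forall fun h => ?_))
  simpa using pow_le_pow_left₀ (norm_nonneg _) (norm_le_pi_norm h i) 2

section SecondOrder

variable {E : Type*} [NormedAddCommGroup E] [NormedSpace ℝ E] [FiniteDimensional ℝ E]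
  {V : Submodule ℝ E} {Q : E → ℝ}

theorem Submodule.exists_pos_mul_norm_sq_le (hQc : Continuous Q)
    (hQh : ∀ (t : ℝ) x, Q (t • x) = t ^ 2 * Q x) (hQ : ∀ x ∈ V, x ≠ 0 → 0 < Q x) :
    ∃ C > 0, ∀ x ∈ V, C * ‖x‖ ^ 2 ≤ Q x := by
  have hQ0 : Q 0 = 0 := by simpa using hQh 0 0
  set S : Set E := V ∩ Metric.sphere 0 1
  have hnormalize : ∀ x ∈ V, x ≠ 0 → ‖x‖⁻¹ • x ∈ S ∧ Q x = ‖x‖ ^ 2 * Q (‖x‖⁻¹ • x) := by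
    intro x hx hx0
    have hn : ‖x‖ ≠ 0 := norm_ne_zero_iff.2 hx0
    refine ⟨⟨V.smul_mem _ hx, by simp [norm_smul, hn]⟩, ?_⟩
    rw [hQh, ← mul_assoc, ← mul_pow, mul_inv_cancel₀ hn, one_pow, one_mul]
  rcases S.eq_empty_or_nonempty with hS | hS
  · refine ⟨1, one_pos, fun x hx => ?_⟩
    obtain rfl : x = 0 := by
      by_contra hx0
      exact (hS ▸ (hnormalize x hx hx0).1 : _ ∈ (∅ : Set E))
    simp [hQ0]
  have hScomp : IsCompact S := (isCompact_sphere 0 1).inter_left V.closed_of_finiteDimensional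
  obtain ⟨w, ⟨hwV, hw1⟩, hmin⟩ := hScomp.exists_isMinOn hS hQc.continuousOn
  refine ⟨Q w, hQ w hwV (ne_zero_of_mem_sphere one_ne_zero ⟨w, hw1⟩), fun x hx => ?_⟩
  rcases eq_or_ne x 0 with rfl | hx0
  · simp [hQ0]
  obtain ⟨hxS, hQx⟩ := hnormalize x hx hx0
  rw [hQx, mul_comm]
  exact mul_le_mul_of_nonneg_left (hmin hxS) (by positivity)

theorem eventually_lt_of_isLittleO_sub_of_pos (hQc : Continuous Q)
    (hQh : ∀ (t : ℝ) x, Q (t • x) = t ^ 2 * Q x) (hQ : ∀ x ∈ V, x ≠ 0 → 0 < Q x)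
    {F : E → ℝ} {x₀ : E}
    (hF : (fun h => F (x₀ + h) - F x₀ - Q h) =o[𝓝[V] 0] fun h => ‖h‖ ^ 2) :
    ∀ᶠ h in 𝓝[V] 0, h ≠ 0 → F x₀ < F (x₀ + h) := by
  obtain ⟨C, hC, hCQ⟩ := V.exists_pos_mul_norm_sq_le hQc hQh hQ
  filter_upwards [hF.def (half_pos hC), self_mem_nhdsWithin] with h hbound hV hh
  simp only [Real.norm_eq_abs, abs_pow, abs_norm] at hbound
  have hpos : 0 < C * ‖h‖ ^ 2 := by positivity
  linarith [(abs_le.1 hbound).1, hCQ h hV]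

end SecondOrder

section Objective

variable {ι κ : Type*} [Fintype κ] (A : Matrix κ ι ℝ) (y : κ → ℝ) (q lam : ℝ)

noncomputable def lqObjective [Fintype ι] (x : ι → ℝ) : ℝ :=
  1 / 2 * ∑ k, ((A *ᵥ x) k - y k) ^ 2 + lam * ∑ i, |x i| ^ q

/-- `hᵀ (A_Iᵀ A_I + λ q (q - 1) Λ(x₀_I)) h` for `h` supported on `I`. -/
noncomputable def lqHessianForm (x₀ : ι → ℝ) (I : Finset ι) (h : ι → ℝ) : ℝ :=
  ∑ i ∈ I, ∑ j ∈ I, h i * (∑ l, A l i * A l j) * h j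
    + lam * q * (q - 1) * ∑ i ∈ I, |x₀ i| ^ (q - 2) * h i ^ 2

theorem sum_sq_mulVec_add_sub [Fintype ι] (x h : ι → ℝ) :
    ∑ k, ((A *ᵥ (x + h)) k - y k) ^ 2 = ∑ k, ((A *ᵥ x) k - y k) ^ 2
      + 2 * ∑ i, h i * (Aᵀ *ᵥ (A *ᵥ x - y)) i + ∑ k, (A *ᵥ h) k ^ 2 := by
  have hcross : ∑ i, h i * (Aᵀ *ᵥ (A *ᵥ x - y)) i = ∑ k, ((A *ᵥ x) k - y k) * (A *ᵥ h) k := by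
    change h ⬝ᵥ (Aᵀ *ᵥ (A *ᵥ x - y)) = (A *ᵥ x - y) ⬝ᵥ (A *ᵥ h)
    rw [dotProduct_mulVec, vecMul_transpose, dotProduct_comm]
  rw [hcross, mul_sum, ← sum_add_distrib, ← sum_add_distrib]
  refine sum_congr rfl fun k _ => ?_
  rw [mulVec_add, Pi.add_apply]
  ring

theorem sum_sq_mulVec_eq_of_support [Fintype ι] {I : Finset ι} {h : ι → ℝ}
    (hh : ∀ i ∉ I, h i = 0) :
    ∑ k, (A *ᵥ h) k ^ 2 = ∑ i ∈ I, ∑ j ∈ I, h i * (∑ l, A l i * A l j) * h j := by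
  have hAh : ∀ k, (A *ᵥ h) k = ∑ i ∈ I, A k i * h i := fun k =>
    (sum_subset (subset_univ I) fun i _ hi => by rw [hh i hi, mul_zero]).symm
  simp_rw [hAh, sq, sum_mul_sum, mul_sum, sum_mul]
  rw [sum_comm]
  refine sum_congr rfl fun i _ => ?_
  rw [sum_comm]
  exact sum_congr rfl fun j _ => sum_congr rfl fun k _ => by ring

theorem continuous_lqHessianForm (x₀ : ι → ℝ) (I : Finset ι) :
    Continuous (lqHessianForm A q lam x₀ I) := by
  unfold lqHessianForm
  fun_prop

theorem lqHessianForm_smul (x₀ : ι → ℝ) (I : Finset ι) (t : ℝ) (h : ι → ℝ) :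
    lqHessianForm A q lam x₀ I (t • h) = t ^ 2 * lqHessianForm A q lam x₀ I h := by
  simp only [lqHessianForm, Pi.smul_apply, smul_eq_mul, mul_add, mul_sum, sum_mul]
  congr 1
  · exact sum_congr rfl fun i _ => sum_congr rfl fun j _ => sum_congr rfl fun l _ => by ring
  · exact sum_congr rfl fun i _ => by ring

theorem lqObjective_add_le_of_disjoint [Fintype ι] (hq : q ≠ 0) {z v : ι → ℝ}
    (hzv : ∀ j, z j = 0 ∨ v j = 0) :
    lqObjective A y q lam z + ∑ j, (v j * (Aᵀ *ᵥ (A *ᵥ z - y)) j + lam * |v j| ^ q)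
      ≤ lqObjective A y q lam (z + v) := by
  have hpen : ∑ j, |(z + v) j| ^ q = ∑ j, |z j| ^ q + ∑ j, |v j| ^ q := by
    rw [← sum_add_distrib]
    refine sum_congr rfl fun j _ => ?_
    rcases hzv j with h | h <;> simp [h, Real.zero_rpow hq]
  have hsq : 0 ≤ ∑ k, (A *ᵥ v) k ^ 2 := sum_nonneg fun k _ => sq_nonneg _
  simp only [lqObjective, sum_sq_mulVec_add_sub, hpen, sum_add_distrib, ← mul_sum]
  linarith

theorem lqObjective_add_sub_eq [Fintype ι] (hq : q ≠ 0) {x₀ : ι → ℝ} {I : Finset ι}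
    (hx₀ : ∀ i ∉ I, x₀ i = 0)
    (hfirst : ∀ i ∈ I,
      (Aᵀ *ᵥ (A *ᵥ x₀ - y)) i + lam * q * Real.sign (x₀ i) * |x₀ i| ^ (q - 1) = 0)
    {h : ι → ℝ} (hh : ∀ i ∉ I, h i = 0) :
    lqObjective A y q lam (x₀ + h) - lqObjective A y q lam x₀ - lqHessianForm A q lam x₀ I h / 2
      = lam * ∑ i ∈ I, absRpowRemainder q (x₀ i) (h i) := by
  have hsupp : ∀ f : ι → ℝ, (∀ i ∉ I, f i = 0) → ∑ i, f i = ∑ i ∈ I, f i := fun f hf =>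
    (sum_subset (subset_univ I) fun i _ hi => hf i hi).symm
  have hlin : ∑ i ∈ I, h i * (Aᵀ *ᵥ (A *ᵥ x₀ - y)) i
      = -∑ i ∈ I, lam * q * Real.sign (x₀ i) * |x₀ i| ^ (q - 1) * h i := by
    rw [← sum_neg_distrib]
    exact sum_congr rfl fun i hi => by linear_combination h i * hfirst i hi
  have hrem : lam * ∑ i ∈ I, absRpowRemainder q (x₀ i) (h i)
      = lam * ∑ i ∈ I, |x₀ i + h i| ^ q - lam * ∑ i ∈ I, |x₀ i| ^ q
        - ∑ i ∈ I, lam * q * Real.sign (x₀ i) * |x₀ i| ^ (q - 1) * h i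
        - lam * q * (q - 1) / 2 * ∑ i ∈ I, |x₀ i| ^ (q - 2) * h i ^ 2 := by
    simp only [mul_sum]
    rw [← sum_sub_distrib, ← sum_sub_distrib, ← sum_sub_distrib]
    exact sum_congr rfl fun i _ => by unfold absRpowRemainder; ring
  rw [lqObjective, lqObjective, sum_sq_mulVec_add_sub, sum_sq_mulVec_eq_of_support A hh,
    hsupp (fun i => h i * _) fun i hi => by simp [hh i hi],
    hsupp (fun i => |(x₀ + h) i| ^ q) fun i hi => by simp [hh i hi, hx₀ i hi, Real.zero_rpow hq],
    hsupp (fun i => |x₀ i| ^ q) fun i hi => by simp [hx₀ i hi, Real.zero_rpow hq]]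
  rw [hlin, hrem, lqHessianForm]
  simp only [Pi.add_apply]
  ring

end Objective

theorem continuous_finset_piecewise {ι X : Type*} [TopologicalSpace X] [DecidableEq ι]
    (I : Finset ι) (x₀ : ι → X) : Continuous fun x : ι → X => I.piecewise x x₀ :=
  continuous_pi fun j => by
    by_cases hj : j ∈ I <;> simp [hj, continuous_apply, continuous_const]

def supportedOn {ι : Type*} (I : Finset ι) : Submodule ℝ (ι → ℝ) where
  carrier := {h | ∀ i ∉ I, h i = 0}
  add_mem' hf hg i hi := by simp [hf i hi, hg i hi]
  zero_mem' _ _ := rfl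
  smul_mem' c _ hf i hi := by simp [hf i hi]

section Minimizer

variable {ι κ : Type*} [Fintype ι] [Fintype κ] (A : Matrix κ ι ℝ) (y : κ → ℝ) {q lam : ℝ}

theorem eventually_lqObjective_lt_add (hq : q ≠ 0) {x₀ : ι → ℝ} {I : Finset ι}
    (hI : ∀ i, i ∈ I ↔ x₀ i ≠ 0)
    (hfirst : ∀ i ∈ I,
      (Aᵀ *ᵥ (A *ᵥ x₀ - y)) i + lam * q * Real.sign (x₀ i) * |x₀ i| ^ (q - 1) = 0)
    (hsecond : ∀ h ∈ supportedOn I, h ≠ 0 → 0 < lqHessianForm A q lam x₀ I h) :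
    ∀ᶠ h in 𝓝[supportedOn I] 0, h ≠ 0 →
      lqObjective A y q lam x₀ < lqObjective A y q lam (x₀ + h) := by
  have hx₀ : ∀ i ∉ I, x₀ i = 0 := fun i hi => not_not.1 (mt (hI i).2 hi)
  refine eventually_lt_of_isLittleO_sub_of_pos (Q := fun h => lqHessianForm A q lam x₀ I h / 2)
    ((continuous_lqHessianForm A q lam x₀ I).div_const 2)
    (fun t h => by rw [lqHessianForm_smul, mul_div_assoc])
    (fun h hh hne => half_pos (hsecond h hh hne)) ?_
  have hrem := ((isLittleO_sum_absRpowRemainder q fun i hi => (hI i).1 hi).const_mul_left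
    lam).mono (nhdsWithin_le_nhds (s := supportedOn I))
  refine hrem.congr' ?_ EventuallyEq.rfl
  filter_upwards [self_mem_nhdsWithin] with h hh
  exact (lqObjective_add_sub_eq A y q lam hq hx₀ hfirst hh).symm

theorem eventually_lqObjective_piecewise_add_le [DecidableEq ι] (hq0 : 0 < q) (hq1 : q < 1)
    (hlam : 0 < lam) {x₀ : ι → ℝ} {I : Finset ι} (hx₀ : ∀ i ∉ I, x₀ i = 0) :
    ∀ᶠ x in 𝓝 x₀, lqObjective A y q lam (I.piecewise x x₀) + ∑ j, |x j - I.piecewise x x₀ j|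
      ≤ lqObjective A y q lam x := by
  set z : (ι → ℝ) → ι → ℝ := fun x => I.piecewise x x₀
  have hz : Continuous z := continuous_finset_piecewise I x₀
  have hzx₀ : z x₀ = x₀ := I.piecewise_same x₀
  set g : (ι → ℝ) → ι → ℝ := fun w => Aᵀ *ᵥ (A *ᵥ w - y)
  have hg : Continuous g := by fun_prop
  set G := ‖g x₀‖ + 1
  have hgbound : ∀ᶠ x in 𝓝 x₀, ∀ j, |g (z x) j| ≤ G := by
    have hgz : Tendsto (fun x => g (z x)) (𝓝 x₀) (𝓝 (g x₀)) :=
      (hg.comp hz).tendsto' x₀ _ (by simp [hzx₀])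
    filter_upwards [hgz.norm.eventually (eventually_lt_nhds (lt_add_one _))] with x hx j
    exact (norm_le_pi_norm _ j).trans hx.le
  have hvsmall : ∀ᶠ x in 𝓝 x₀, ∀ j, (G + 1) / lam * |x j - z x j| ≤ |x j - z x j| ^ q := by
    refine eventually_all.2 fun j => ?_
    have hv : Tendsto (fun x => x j - z x j) (𝓝 x₀) (𝓝 0) :=
      ((continuous_apply j).sub ((continuous_apply j).comp hz)).tendsto' x₀ 0 (by simp [hzx₀])
    exact hv.eventually (eventually_mul_abs_le_abs_rpow hq1 _)
  filter_upwards [hgbound, hvsmall] with x hgx hvx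
  have hdisj : ∀ j, z x j = 0 ∨ (x - z x) j = 0 := fun j => by
    by_cases hj : j ∈ I
    · right; simp [z, hj]
    · left; simp [z, hj, hx₀ j hj]
  calc lqObjective A y q lam (z x) + ∑ j, |x j - z x j|
      ≤ lqObjective A y q lam (z x)
        + ∑ j, ((x - z x) j * g (z x) j + lam * |(x - z x) j| ^ q) := by
        gcongr with j
        have hcross : -(|x j - z x j| * G) ≤ (x j - z x j) * g (z x) j := by
          calc -(|x j - z x j| * G) ≤ -(|x j - z x j| * |g (z x) j|) := by gcongr; exact hgx j
            _ = -|(x j - z x j) * g (z x) j| := by rw [abs_mul]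
            _ ≤ _ := neg_abs_le _
        have hpen : (G + 1) * |x j - z x j| ≤ lam * |x j - z x j| ^ q := by
          have := mul_le_mul_of_nonneg_left (hvx j) hlam.le
          rwa [← mul_assoc, mul_div_cancel₀ _ hlam.ne'] at this
        simp only [Pi.sub_apply]
        linarith
    _ ≤ lqObjective A y q lam (z x + (x - z x)) :=
        lqObjective_add_le_of_disjoint A y q lam hq0.ne' hdisj
    _ = lqObjective A y q lam x := by rw [add_sub_cancel]

theorem eventually_lqObjective_lt [DecidableEq ι] (hq0 : 0 < q) (hq1 : q < 1) (hlam : 0 < lam)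
    {x₀ : ι → ℝ} {I : Finset ι} (hI : ∀ i, i ∈ I ↔ x₀ i ≠ 0)
    (hfirst : ∀ i ∈ I,
      (Aᵀ *ᵥ (A *ᵥ x₀ - y)) i + lam * q * Real.sign (x₀ i) * |x₀ i| ^ (q - 1) = 0)
    (hsecond : ∀ h ∈ supportedOn I, h ≠ 0 → 0 < lqHessianForm A q lam x₀ I h) :
    ∀ᶠ x in 𝓝 x₀, x ≠ x₀ → lqObjective A y q lam x₀ < lqObjective A y q lam x := by
  have hx₀ : ∀ i ∉ I, x₀ i = 0 := fun i hi => not_not.1 (mt (hI i).2 hi)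
  have hproj : Tendsto (fun x => I.piecewise x x₀ - x₀) (𝓝 x₀) (𝓝[supportedOn I] 0) := by
    refine tendsto_nhdsWithin_iff.2 ⟨?_, Eventually.of_forall fun x i hi => by simp [hi]⟩
    exact ((continuous_finset_piecewise I x₀).sub continuous_const).tendsto' x₀ 0
      (by rw [Pi.sub_apply, I.piecewise_same, sub_self])
  filter_upwards [hproj.eventually (eventually_lqObjective_lt_add A y hq0.ne' hI hfirst hsecond),
    eventually_lqObjective_piecewise_add_le A y hq0 hq1 hlam hx₀] with x hon hoff hne
  rw [add_sub_cancel] at hon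
  rcases eq_or_ne (I.piecewise x x₀) x₀ with hz | hz
  · obtain ⟨j, hj⟩ := Function.ne_iff.1 (by rwa [hz] : x ≠ I.piecewise x x₀)
    have hoff_pos : 0 < ∑ j, |x j - I.piecewise x x₀ j| :=
      sum_pos' (fun j _ => abs_nonneg _) ⟨j, mem_univ j, abs_pos.2 (sub_ne_zero.2 hj)⟩
    linarith [congrArg (lqObjective A y q lam) hz]
  · have hoff_nonneg : 0 ≤ ∑ j, |x j - I.piecewise x x₀ j| := sum_nonneg fun j _ => abs_nonneg _
    linarith [hon (sub_ne_zero.2 hz)]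

end Minimizer

theorem exists_pos_forall_sqrt_sum_sq_lt {ι : Type*} [Fintype ι] {p : (ι → ℝ) → Prop}
    {x₀ : ι → ℝ} (h : ∀ᶠ x in 𝓝 x₀, p x) :
    ∃ ε > 0, ∀ x, √(∑ i, (x i - x₀ i) ^ 2) < ε → p x := by
  obtain ⟨ε, hε, hp⟩ := Metric.eventually_nhds_iff.1 h
  refine ⟨ε, hε, fun x hx => hp ((dist_pi_lt_iff hε).2 fun i => ?_)⟩
  rw [Real.dist_eq]
  exact (Real.abs_le_sqrt
    (single_le_sum (fun j _ => sq_nonneg (x j - x₀ j)) (mem_univ i))).trans_lt hx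

/-- Theorem 3.6: if `x*` satisfies the first-order condition on its support `I`
and the restricted second-order matrix `A_IᵀA_I + λq(q−1)Λ(x*_I)` is positive
definite, then `x*` is a strict local minimizer of
`T_λ(x) = ½‖Ax−y‖₂² + λ∑|xᵢ|^q`. -/
theorem gaita_local_minimizer (m N : ℕ) (A : Matrix (Fin m) (Fin N) ℝ)
    (y : Fin m → ℝ) (q lam : ℝ) (hq0 : 0 < q) (hq1 : q < 1) (hlam : 0 < lam)
    (T : (Fin N → ℝ) → ℝ)
    (hT : ∀ x, T x = (1 / 2) * ∑ k, (A.mulVec x k - y k) ^ 2 + lam * ∑ i, |x i| ^ q)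
    (xstar : Fin N → ℝ) (I : Finset (Fin N)) (hI : ∀ i, i ∈ I ↔ xstar i ≠ 0)
    (hfirst : ∀ i ∈ I, (∑ k, A k i * (A.mulVec xstar k - y k)) +
      lam * q * Real.sign (xstar i) * |xstar i| ^ (q - 1) = 0)
    (hsecond : ∀ h : Fin N → ℝ, (∀ i ∉ I, h i = 0) → h ≠ 0 →
      0 < (∑ i ∈ I, ∑ j ∈ I, h i * (∑ l, A l i * A l j) * h j) +
        lam * q * (q - 1) * ∑ i ∈ I, |xstar i| ^ (q - 2) * h i ^ 2) :
    ∃ ε > 0, ∀ x : Fin N → ℝ, x ≠ xstar →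
      Real.sqrt (∑ i, (x i - xstar i) ^ 2) < ε → T xstar < T x := by
  obtain rfl : T = lqObjective A y q lam := funext hT
  obtain ⟨ε, hε, hball⟩ := exists_pos_forall_sqrt_sum_sq_lt
    (eventually_lqObjective_lt A y hq0 hq1 hlam hI hfirst hsecond)
  exact ⟨ε, hε, fun x hne hx => hball x hx hne⟩
end

section
/- Let 0<q<1, λ>0, μ>0, and suppose e ≥ η_{λμ,q} = (2λμ(1−q))^{1/(2−q)}. If μ > q/(2σ) for some σ > 0, then σ > λq(1−q)e^{q−2}. In particular, if λ_min(A_IᵀA_I) ≥ σ and every support entry of x* has magnitude at least η_{λμ,q}, then A_IᵀA_I + λq(q−1)Λ(x*_I) is positive definite. -/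
/-!
Above the threshold `η = c ^ (1/(2-q))`, `c = 2λμ(1-q)`, the curvature `λq(1-q)|x|^(q-2)` of the
`ℓ_q` penalty is at most `λq(1-q)η^(q-2) = λq(1-q)/c = q/(2μ)`, and `μ > q/(2σ)` says exactly that
`q/(2μ) < σ`. So on the support the penalty's negative curvature is dominated by the curvature
`σ` of the least-squares term.
-/

theorem Real.rpow_sub_two_le_inv_of_rpow_le {c q x : ℝ} (hc : 0 < c) (hq : q < 2)
    (hx : c ^ (1 / (2 - q)) ≤ x) : x ^ (q - 2) ≤ c⁻¹ := by
  have hη : (c ^ (1 / (2 - q))) ^ (q - 2) = c⁻¹ := by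
    have h2q : 2 - q ≠ 0 := by linarith
    rw [← Real.rpow_mul hc.le, show 1 / (2 - q) * (q - 2) = -1 by field_simp; ring,
      Real.rpow_neg_one]
  exact hη ▸ Real.rpow_le_rpow_of_nonpos (by positivity) hx (by linarith)

theorem lq_curvature_le_of_threshold_le {q lam mu x : ℝ} (hq0 : 0 < q) (hq1 : q < 1)
    (hlam : 0 < lam) (hmu : 0 < mu)
    (hx : (2 * lam * mu * (1 - q)) ^ ((1 : ℝ) / (2 - q)) ≤ x) :
    lam * q * (1 - q) * x ^ (q - 2) ≤ q / (2 * mu) := by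
  have hc : 0 < 2 * lam * mu * (1 - q) := by have := sub_pos.2 hq1; positivity
  have hcoef : 0 ≤ lam * q * (1 - q) := by have := sub_pos.2 hq1; positivity
  calc lam * q * (1 - q) * x ^ (q - 2)
      ≤ lam * q * (1 - q) * (2 * lam * mu * (1 - q))⁻¹ :=
        mul_le_mul_of_nonneg_left
          (Real.rpow_sub_two_le_inv_of_rpow_le hc (by linarith) hx) hcoef
    _ = q / (2 * mu) := by field_simp [(sub_pos.2 hq1).ne']

theorem Finset.sum_sq_pos_of_ne_zero {ι : Type*} {I : Finset ι} {h : ι → ℝ}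
    (hsupp : ∀ i ∉ I, h i = 0) (hne : h ≠ 0) : 0 < ∑ i ∈ I, h i ^ 2 := by
  obtain ⟨i, hi⟩ := Function.ne_iff.mp hne
  have hiI : i ∈ I := by_contra fun hiI => hi (hsupp i hiI)
  exact Finset.sum_pos' (fun j _ => sq_nonneg (h j)) ⟨i, hiI, pow_two_pos_of_ne_zero hi⟩

theorem sub_sum_mul_sq_pos {ι : Type*} {I : Finset ι} {h d : ι → ℝ} {Q sigma kappa : ℝ}
    (hQ : sigma * ∑ i ∈ I, h i ^ 2 ≤ Q) (hd : ∀ i ∈ I, d i ≤ kappa) (hlt : kappa < sigma)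
    (hpos : 0 < ∑ i ∈ I, h i ^ 2) : 0 < Q - ∑ i ∈ I, d i * h i ^ 2 := by
  have hsum : ∑ i ∈ I, d i * h i ^ 2 ≤ kappa * ∑ i ∈ I, h i ^ 2 := by
    rw [Finset.mul_sum]
    exact Finset.sum_le_sum fun i hi => mul_le_mul_of_nonneg_right (hd i hi) (sq_nonneg _)
  nlinarith

theorem gaita_suff_cond_b_general (m N : ℕ) (A : Matrix (Fin m) (Fin N) ℝ)
    (q lam mu e sigma : ℝ) (hq0 : 0 < q) (hq1 : q < 1) (hlam : 0 < lam)
    (hmu : 0 < mu) (hsigma0 : 0 < sigma) (hmusig : q / (2 * sigma) < mu)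
    (he : (2 * lam * mu * (1 - q)) ^ ((1 : ℝ) / (2 - q)) ≤ e)
    (xstar : Fin N → ℝ) (I : Finset (Fin N))
    (hxstar : ∀ i ∈ I, (2 * lam * mu * (1 - q)) ^ ((1 : ℝ) / (2 - q)) ≤ |xstar i|)
    (hsigma : ∀ h : Fin N → ℝ, (∀ i ∉ I, h i = 0) →
      sigma * ∑ i ∈ I, h i ^ 2 ≤ ∑ i ∈ I, ∑ j ∈ I, h i * (∑ l, A l i * A l j) * h j) :
    lam * q * (1 - q) * e ^ (q - 2) < sigma ∧
    (∀ h : Fin N → ℝ, (∀ i ∉ I, h i = 0) → h ≠ 0 →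
      0 < (∑ i ∈ I, ∑ j ∈ I, h i * (∑ l, A l i * A l j) * h j) +
        lam * q * (q - 1) * ∑ i ∈ I, |xstar i| ^ (q - 2) * h i ^ 2) := by
  have hqmu : q / (2 * mu) < sigma := by
    rw [← div_div] at hmusig ⊢
    exact (div_lt_comm₀ hsigma0 hmu).1 hmusig
  refine ⟨(lq_curvature_le_of_threshold_le hq0 hq1 hlam hmu he).trans_lt hqmu,
    fun h hsupp hne => ?_⟩
  have hpen : lam * q * (q - 1) * ∑ i ∈ I, |xstar i| ^ (q - 2) * h i ^ 2 =
      -∑ i ∈ I, (lam * q * (1 - q) * |xstar i| ^ (q - 2)) * h i ^ 2 := by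
    rw [Finset.mul_sum, ← Finset.sum_neg_distrib]
    exact Finset.sum_congr rfl fun i _ => by ring
  rw [hpen, ← sub_eq_add_neg]
  exact sub_sum_mul_sq_pos (hsigma h hsupp)
    (fun i hi => lq_curvature_le_of_threshold_le hq0 hq1 hlam hmu (hxstar i hi)) hqmu
    (Finset.sum_sq_pos_of_ne_zero hsupp hne)

/-- Sufficient condition (b) of Theorem 3.7: if `e ≥ η = (2λμ(1−q))^(1/(2−q))`
and `μ > q/(2σ)` with `σ > 0`, then `σ > λq(1−q)e^(q−2)`; in particular, if
`λ_min(A_IᵀA_I) ≥ σ` and every support entry of `x*` has magnitude at least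
`η`, then `A_IᵀA_I + λq(q−1)Λ(x*_I)` is positive definite. -/
theorem gaita_suff_cond_b (m N : ℕ) (A : Matrix (Fin m) (Fin N) ℝ)
    (q lam mu e sigma : ℝ) (hq0 : 0 < q) (hq1 : q < 1) (hlam : 0 < lam)
    (hmu : 0 < mu) (hsigma0 : 0 < sigma) (hmusig : q / (2 * sigma) < mu)
    (he : (2 * lam * mu * (1 - q)) ^ ((1 : ℝ) / (2 - q)) ≤ e)
    (xstar : Fin N → ℝ) (I : Finset (Fin N)) (hI : ∀ i, i ∈ I ↔ xstar i ≠ 0)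
    (hxstar : ∀ i ∈ I, (2 * lam * mu * (1 - q)) ^ ((1 : ℝ) / (2 - q)) ≤ |xstar i|)
    (hsigma : ∀ h : Fin N → ℝ, (∀ i ∉ I, h i = 0) →
      sigma * ∑ i ∈ I, h i ^ 2 ≤ ∑ i ∈ I, ∑ j ∈ I, h i * (∑ l, A l i * A l j) * h j) :
    lam * q * (1 - q) * e ^ (q - 2) < sigma ∧
    (∀ h : Fin N → ℝ, (∀ i ∉ I, h i = 0) → h ≠ 0 →
      0 < (∑ i ∈ I, ∑ j ∈ I, h i * (∑ l, A l i * A l j) * h j) +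
        lam * q * (q - 1) * ∑ i ∈ I, |xstar i| ^ (q - 2) * h i ^ 2) :=
  gaita_suff_cond_b_general m N A q lam mu e sigma hq0 hq1 hlam hmu hsigma0 hmusig he xstar I hxstar
    hsigma
end
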